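/- (Parities of the crossings in a Reidemeister III configuration, second connectivity.) Let i, j, k be distinct labels and let G = P ++ [(i,u,+), (j,u,+)] ++ Q ++ [(j,o,+), (k,o,+)] ++ R ++ [(i,o,+), (k,u,+)] ++ S be a signed Gauss code in which the labels i, j, k occur only in the three displayed adjacent pairs. Then the sum of the parities of the crossings i, j, and k is even; equivalently, either all three of i, j, k are even crossings, or exactly two of them are odd and one is even. -/
import Mathlib


/-- The marker recording whether an entry of a Gauss code lies on the
understrand (`u`) or overstrand (`o`) of the crossing. -/
inductive Strand : Type
  | u : Strand
  | o : Strand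
deriving DecidableEq

/-- The sign of a crossing. -/
inductive GSign : Type
  | pos : GSign
  | neg : GSign
deriving DecidableEq

/-- An entry `(ℓ, m, ε)` of a signed Gauss code: a label, a strand marker, and a sign.
A signed Gauss code is a `List (GaussEntry L)`. -/
abbrev GaussEntry (L : Type u) : Type u := L × Strand × GSign

/-- A label `ℓ` is a crossing of the signed Gauss code `G` if it occurs in exactly two
entries of `G`, once with marker `u` and once with marker `o`, both with the same sign. -/

def IsCrossing {L : Type u} [DecidableEq L] (G : List (GaussEntry L)) (ℓ : L) : Prop :=
  G.countP (fun e => decide (e.1 = ℓ)) = 2 ∧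
  ∃ ε : GSign, (ℓ, Strand.u, ε) ∈ G ∧ (ℓ, Strand.o, ε) ∈ G

/-- The number of entries of `G` lying strictly between the two occurrences of the
label `ℓ` (for `ℓ` occurring exactly twice in `G`). -/
def betweenCount {L : Type u} [DecidableEq L] (G : List (GaussEntry L)) (ℓ : L) : ℕ :=
  (G.drop (G.findIdx (fun e => decide (e.1 = ℓ)) + 1)).findIdx (fun e => decide (e.1 = ℓ))

/-- The parity of the crossing `ℓ` in `G`: the residue mod 2 of the number of entries of
`G` lying strictly between the two occurrences of `ℓ` (`0` = even, `1` = odd). -/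
def crossingParity {L : Type u} [DecidableEq L] (G : List (GaussEntry L)) (ℓ : L) : ℕ :=
  betweenCount G ℓ % 2

private lemma findIdx_append_false {α : Type*} (p : α → Bool) (A B : List α)
    (hA : ∀ e ∈ A, p e = false) :
    (A ++ B).findIdx p = A.length + B.findIdx p := by
  induction A with
  | nil => simp
  | cons a A ih =>
    simp only [List.cons_append, List.findIdx_cons, hA a (by simp),
      ih (fun e he => hA e (by simp [he])), cond_false, List.length_cons]
    omega

private lemma betweenCount_eq {L : Type*} [DecidableEq L] (A B C : List (GaussEntry L))
    (ℓ : L) (x y : GaussEntry L) (hx : x.1 = ℓ) (hy : y.1 = ℓ)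
    (hA : ∀ e ∈ A, e.1 ≠ ℓ) (hB : ∀ e ∈ B, e.1 ≠ ℓ) :
    betweenCount (A ++ x :: (B ++ y :: C)) ℓ = B.length := by
  unfold betweenCount
  have h1 : (A ++ x :: (B ++ y :: C)).findIdx (fun e => decide (e.1 = ℓ)) = A.length := by
    rw [findIdx_append_false _ A _ (fun e he => by simp [hA e he]), List.findIdx_cons]
    simp [hx]
  rw [h1]
  have h2 : A ++ x :: (B ++ y :: C) = (A ++ [x]) ++ (B ++ y :: C) := by simp
  rw [h2, List.drop_left' (by simp),
    findIdx_append_false _ B _ (fun e he => by simp [hB e he]), List.findIdx_cons]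
  simp [hy]


/-- (Parities of the crossings in a Reidemeister III configuration, second
connectivity.) In `G = P ++ [iᵤ⁺, jᵤ⁺] ++ Q ++ [jₒ⁺, kₒ⁺] ++ R ++ [iₒ⁺, kᵤ⁺] ++ S`
(with `i, j, k` distinct and occurring only in the displayed pairs), the sum of the
parities of the crossings `i`, `j`, `k` is even: either all three are even, or exactly
two are odd and one is even. -/
theorem reidemeister_III_second_connectivity_parity_sum_even {L : Type*} [DecidableEq L]
    (P Q R S : List (GaussEntry L)) (i j k : L)
    (hij : i ≠ j) (hik : i ≠ k) (hjk : j ≠ k)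
    (hfresh : ∀ e ∈ P ++ Q ++ R ++ S, e.1 ≠ i ∧ e.1 ≠ j ∧ e.1 ≠ k)
    (G : List (GaussEntry L))
    (hG : G = P ++ [(i, Strand.u, GSign.pos), (j, Strand.u, GSign.pos)] ++ Q
            ++ [(j, Strand.o, GSign.pos), (k, Strand.o, GSign.pos)] ++ R
            ++ [(i, Strand.o, GSign.pos), (k, Strand.u, GSign.pos)] ++ S) :
    (crossingParity G i + crossingParity G j + crossingParity G k) % 2 = 0 := by
  have fP : ∀ e ∈ P, e.1 ≠ i ∧ e.1 ≠ j ∧ e.1 ≠ k := fun e he => hfresh e (by simp [he])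
  have fQ : ∀ e ∈ Q, e.1 ≠ i ∧ e.1 ≠ j ∧ e.1 ≠ k := fun e he => hfresh e (by simp [he])
  have fR : ∀ e ∈ R, e.1 ≠ i ∧ e.1 ≠ j ∧ e.1 ≠ k := fun e he => hfresh e (by simp [he])
  have hi : betweenCount G i =
      ((j, Strand.u, GSign.pos) :: (Q ++ (j, Strand.o, GSign.pos) ::
        (k, Strand.o, GSign.pos) :: R)).length := by
    have : G = P ++ (i, Strand.u, GSign.pos) ::
        (((j, Strand.u, GSign.pos) :: (Q ++ (j, Strand.o, GSign.pos) ::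
          (k, Strand.o, GSign.pos) :: R)) ++ (i, Strand.o, GSign.pos) ::
          ((k, Strand.u, GSign.pos) :: S)) := by simp [hG]
    rw [this]
    refine betweenCount_eq _ _ _ _ _ _ rfl rfl (fun e he => (fP e he).1) ?_
    intro e he
    simp only [List.mem_cons, List.mem_append] at he
    rcases he with h | h | h | h
    · simp [h, Ne.symm hij]
    · exact (fQ e h).1
    · simp [h, Ne.symm hij]
    rcases h with h | h
    · simp [h, Ne.symm hik]
    · exact (fR e h).1
  have hj : betweenCount G j = Q.length := by
    have : G = (P ++ [(i, Strand.u, GSign.pos)]) ++ (j, Strand.u, GSign.pos) ::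
        (Q ++ (j, Strand.o, GSign.pos) ::
          ((k, Strand.o, GSign.pos) :: R ++ (i, Strand.o, GSign.pos) ::
            (k, Strand.u, GSign.pos) :: S)) := by simp [hG]
    rw [this]
    refine betweenCount_eq _ _ _ _ _ _ rfl rfl ?_ (fun e he => (fQ e he).2.1)
    intro e he
    simp only [List.mem_append, List.mem_singleton] at he
    rcases he with h | h
    · exact (fP e h).2.1
    · simp [h, hij]
  have hk : betweenCount G k = (R ++ [(i, Strand.o, GSign.pos)]).length := by
    have : G = (P ++ (i, Strand.u, GSign.pos) :: (j, Strand.u, GSign.pos) ::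
        (Q ++ [(j, Strand.o, GSign.pos)])) ++ (k, Strand.o, GSign.pos) ::
        ((R ++ [(i, Strand.o, GSign.pos)]) ++ (k, Strand.u, GSign.pos) :: S) := by
      simp [hG]
    rw [this]
    refine betweenCount_eq _ _ _ _ _ _ rfl rfl ?_ ?_
    · intro e he
      simp only [List.mem_append, List.mem_cons, List.mem_singleton] at he
      rcases he with h | h | h | h | h
      · exact (fP e h).2.2
      · simp [h, hik]
      · simp [h, hjk]
      · exact (fQ e h).2.2
      · rcases h with h | h
        · simp [h, hjk]
        · simp at h
    · intro e he
      simp only [List.mem_append, List.mem_singleton] at he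
      rcases he with h | h
      · exact (fR e h).2.2
      · simp [h, hik]
  simp only [crossingParity, hi, hj, hk, List.length_cons, List.length_append,
    List.length_singleton, List.length_nil]
  omega
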